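/- Let Y be a real Banach space and let X = X₁ ⊕_a X₂ be the absolute sum of real Banach spaces X₁ and X₂ with respect to an absolute norm N which is of type 1 or of type ∞ (so X₁ is an absolute summand of X of type 1 or ∞). If the pair (X₁ ⊕_a X₂, Y) has the Bishop–Phelps–Bollobás property for compact operators, then the pair (X₁, Y) has the Bishop–Phelps–Bollobás property for compact operators. -/

import Mathlib

open Filter Topology

/-- `N` is an absolute norm on `ℝ²`: a norm with `N(1,0)=N(0,1)=1` and
`N(s,t)=N(|s|,|t|)`. -/
structure IsAbsoluteNorm (N : ℝ → ℝ → ℝ) : Prop where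
  nonneg : ∀ s t : ℝ, 0 ≤ N s t
  eq_zero_iff : ∀ s t : ℝ, N s t = 0 ↔ s = 0 ∧ t = 0
  triangle : ∀ s₁ t₁ s₂ t₂ : ℝ, N (s₁ + s₂) (t₁ + t₂) ≤ N s₁ t₁ + N s₂ t₂
  smul : ∀ c s t : ℝ, N (c * s) (c * t) = |c| * N s t
  one_zero : N 1 0 = 1
  zero_one : N 0 1 = 1
  abs_eq : ∀ s t : ℝ, N s t = N |s| |t|

/-- An absolute norm is of type 1 if `|x| + K|y| ≤ N(x,y)` for some `K > 0`. -/
def AbsNormTypeOne (N : ℝ → ℝ → ℝ) : Prop :=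
  ∃ K : ℝ, 0 < K ∧ ∀ x y : ℝ, |x| + K * |y| ≤ N x y

/-- An absolute norm is of type ∞ if `N(1,b₀) = 1` for some `b₀ > 0`. -/
def AbsNormTypeInfty (N : ℝ → ℝ → ℝ) : Prop :=
  ∃ b₀ : ℝ, 0 < b₀ ∧ N 1 b₀ = 1

/-- The pair `(X, Y)` has the Bishop–Phelps–Bollobás property for compact operators. -/
def HasBPBpCompact (X Y : Type*) [NormedAddCommGroup X] [NormedSpace ℝ X]
    [NormedAddCommGroup Y] [NormedSpace ℝ Y] : Prop :=
  ∀ ε : ℝ, 0 < ε → ∃ η : ℝ, 0 < η ∧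
    ∀ (T : X →L[ℝ] Y) (x₀ : X), IsCompactOperator (⇑T) →
      ‖T‖ = 1 → ‖x₀‖ = 1 → 1 - η < ‖T x₀‖ →
      ∃ (S : X →L[ℝ] Y) (x₁ : X), IsCompactOperator (⇑S) ∧
        ‖S‖ = 1 ∧ ‖x₁‖ = 1 ∧ ‖S x₁‖ = 1 ∧ ‖x₁ - x₀‖ < ε ∧ ‖S - T‖ < ε

/-!
Lift `T₁ : X₁ → Y` to `T₁ ∘ π₁` on `X`, which has the same norm, and apply the BPBp of
`(X, Y)` at `(x₀, 0)`. Read on `X₁ × X₂`, this gives a compact `S` with `‖S (w, z)‖ ≤ N(‖w‖, ‖z‖)`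
attaining the value one at some `(u₁, u₂)` near `(x₀, 0)`, close to `T₁` on `X₁` and small
on `X₂`. If `N` is of type 1, the vertex of its unit ball at `(1, 0)` forces `u₂ = 0`, so `S`
restricted to `X₁` does the job. If `N` is of type ∞, then `N(a, c) = a` whenever
`0 ≤ c ≤ b₀ a`, so `w ↦ S (w, f w • u₂)`, with `f` a functional norming `u₁`, is still a
contraction, and it attains its norm at `u₁`.
-/

namespace IsAbsoluteNorm

variable {N : ℝ → ℝ → ℝ}

lemma apply_zero_right (hN : IsAbsoluteNorm N) (s : ℝ) : N s 0 = |s| := by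
  simpa [hN.one_zero] using hN.smul s 1 0

lemma apply_zero_left (hN : IsAbsoluteNorm N) (t : ℝ) : N 0 t = |t| := by
  simpa [hN.zero_one] using hN.smul t 0 1

lemma apply_neg_left (hN : IsAbsoluteNorm N) (s t : ℝ) : N (-s) t = N s t := by
  rw [hN.abs_eq, abs_neg, ← hN.abs_eq]

lemma apply_neg_right (hN : IsAbsoluteNorm N) (s t : ℝ) : N s (-t) = N s t := by
  rw [hN.abs_eq, abs_neg, ← hN.abs_eq]

lemma abs_left_le (hN : IsAbsoluteNorm N) (s t : ℝ) : |s| ≤ N s t := by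
  have h := hN.triangle s t s (-t)
  rw [add_neg_cancel, hN.apply_zero_right, hN.apply_neg_right, ← two_mul, abs_mul,
    abs_two] at h
  linarith

lemma abs_right_le (hN : IsAbsoluteNorm N) (s t : ℝ) : |t| ≤ N s t := by
  have h := hN.triangle s t (-s) t
  rw [add_neg_cancel, hN.apply_zero_left, hN.apply_neg_left, ← two_mul, abs_mul,
    abs_two] at h
  linarith

/-- `N a ·` is convex and even, hence monotone on `[0, ∞)`: `c` is a convex combination
of `c'` and `-c'`. -/
lemma mono_right (hN : IsAbsoluteNorm N) (a : ℝ) {c c' : ℝ} (hc : 0 ≤ c) (hcc' : c ≤ c') :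
    N a c ≤ N a c' := by
  obtain rfl | hc' := (hc.trans hcc').eq_or_lt
  · rw [le_antisymm hcc' hc]
  set l := (c' + c) / (2 * c')
  have hl0 : 0 ≤ l := by positivity
  have hl1 : 0 ≤ 1 - l := by
    rw [sub_nonneg, div_le_one (by positivity)]
    linarith
  have h := hN.triangle (l * a) (l * c') ((1 - l) * a) ((1 - l) * -c')
  have hc_comb : l * c' + (1 - l) * -c' = c := by
    simp only [l]
    field_simp
    ring
  rw [← add_mul, add_sub_cancel, one_mul, hc_comb, hN.smul, hN.smul, hN.apply_neg_right,
    abs_of_nonneg hl0, abs_of_nonneg hl1, ← add_mul, add_sub_cancel, one_mul] at h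
  exact h

lemma apply_le_left_of_right_le {b₀ : ℝ} (hN : IsAbsoluteNorm N) (hb₀ : N 1 b₀ = 1)
    {a c : ℝ} (ha : 0 ≤ a) (hc : 0 ≤ c) (hcb : c ≤ b₀ * a) : N a c ≤ a :=
  calc N a c ≤ N (a * 1) (a * b₀) := by
        rw [mul_one, mul_comm]
        exact hN.mono_right a hc hcb
    _ = a := by rw [hN.smul, hb₀, mul_one, abs_of_nonneg ha]

end IsAbsoluteNorm

namespace ContinuousLinearMap

variable {E F : Type*} [NormedAddCommGroup E] [NormedSpace ℝ E]
  [NormedAddCommGroup F] [NormedSpace ℝ F]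

lemma norm_eq_one_of_norm_apply_eq_one {A : E →L[ℝ] F} (hA : ∀ w, ‖A w‖ ≤ ‖w‖) {u : E}
    (hu : ‖u‖ ≤ 1) (hAu : ‖A u‖ = 1) : ‖A‖ = 1 ∧ ‖u‖ = 1 := by
  have hA1 : ‖A‖ ≤ 1 := A.opNorm_le_bound zero_le_one fun w => (one_mul ‖w‖).symm ▸ hA w
  have h1 : 1 ≤ ‖A‖ * ‖u‖ := hAu ▸ A.le_opNorm u
  constructor <;> nlinarith [norm_nonneg A, norm_nonneg u]

lemma exists_apply_eq_one_norm_eq_inv {u : E} (hu : u ≠ 0) :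
    ∃ f : E →L[ℝ] ℝ, f u = 1 ∧ ‖f‖ = ‖u‖⁻¹ := by
  obtain ⟨g, hg, hgu⟩ := exists_dual_vector ℝ u (norm_ne_zero_iff.mpr hu)
  refine ⟨‖u‖⁻¹ • g, ?_, ?_⟩
  · simp [hgu, norm_ne_zero_iff.mpr hu]
  · rw [norm_smul, hg, mul_one, norm_inv, norm_norm]

end ContinuousLinearMap

open ContinuousLinearMap

section AbsoluteSum

variable {X X₁ X₂ Y : Type*} [NormedAddCommGroup X] [NormedSpace ℝ X]
  [NormedAddCommGroup X₁] [NormedSpace ℝ X₁] [NormedAddCommGroup X₂] [NormedSpace ℝ X₂]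
  [NormedAddCommGroup Y] [NormedSpace ℝ Y] {N : ℝ → ℝ → ℝ} {e : X ≃L[ℝ] X₁ × X₂}

lemma norm_comp_inl_apply_le {S : X₁ × X₂ →L[ℝ] Y} (hN : IsAbsoluteNorm N)
    (hS : ∀ p : X₁ × X₂, ‖S p‖ ≤ N ‖p.1‖ ‖p.2‖) (w : X₁) : ‖S.comp (inl ℝ X₁ X₂) w‖ ≤ ‖w‖ := by
  simpa [hN.apply_zero_right] using hS (w, 0)

lemma snd_eq_zero_of_typeOne {K : ℝ} (hN : IsAbsoluteNorm N)
    (hK : ∀ x y : ℝ, |x| + K * |y| ≤ N x y) {S : X₁ × X₂ →L[ℝ] Y}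
    (hS : ∀ p : X₁ × X₂, ‖S p‖ ≤ N ‖p.1‖ ‖p.2‖) (hSinr : ‖S.comp (inr ℝ X₁ X₂)‖ < K)
    {u : X₁ × X₂} (hu : N ‖u.1‖ ‖u.2‖ = 1) (hSu : ‖S u‖ = 1) : u.2 = 0 := by
  have hupper : ‖u.1‖ + K * ‖u.2‖ ≤ 1 := by simpa [hu] using hK ‖u.1‖ ‖u.2‖
  have hlower : 1 ≤ ‖u.1‖ + ‖S.comp (inr ℝ X₁ X₂)‖ * ‖u.2‖ :=
    calc 1 = ‖S.comp (inl ℝ X₁ X₂) u.1 + S.comp (inr ℝ X₁ X₂) u.2‖ := by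
          rw [comp_inl_add_comp_inr, hSu]
      _ ≤ ‖u.1‖ + ‖S.comp (inr ℝ X₁ X₂)‖ * ‖u.2‖ :=
          (norm_add_le _ _).trans
            (add_le_add (norm_comp_inl_apply_le hN hS u.1) (le_opNorm _ _))
  have : ‖u.2‖ ≤ 0 := by nlinarith [norm_nonneg u.2]
  exact norm_le_zero_iff.mp this

lemma norm_comp_prod_smulRight_apply_le {b₀ : ℝ} (hN : IsAbsoluteNorm N) (hb₀ : N 1 b₀ = 1)
    {S : X₁ × X₂ →L[ℝ] Y} (hS : ∀ p : X₁ × X₂, ‖S p‖ ≤ N ‖p.1‖ ‖p.2‖)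
    {f : X₁ →L[ℝ] ℝ} {v : X₂} (hfv : ‖f‖ * ‖v‖ ≤ b₀) (w : X₁) :
    ‖S.comp ((ContinuousLinearMap.id ℝ X₁).prod (f.smulRight v)) w‖ ≤ ‖w‖ := by
  have hsnd : ‖f w • v‖ ≤ b₀ * ‖w‖ :=
    calc ‖f w • v‖ ≤ ‖f‖ * ‖w‖ * ‖v‖ := by
          rw [norm_smul]
          exact mul_le_mul_of_nonneg_right (f.le_opNorm w) (norm_nonneg v)
      _ = ‖f‖ * ‖v‖ * ‖w‖ := by ring
      _ ≤ b₀ * ‖w‖ := mul_le_mul_of_nonneg_right hfv (norm_nonneg w)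
  calc _ ≤ N ‖w‖ ‖f w • v‖ := hS (w, f w • v)
    _ ≤ ‖w‖ := hN.apply_le_left_of_right_le hb₀ (norm_nonneg w) (norm_nonneg _) hsnd

lemma norm_comp_prod_sub_comp_inl_le (S : X₁ × X₂ →L[ℝ] Y) (F : X₁ →L[ℝ] X₂) :
    ‖S.comp ((ContinuousLinearMap.id ℝ X₁).prod F) - S.comp (inl ℝ X₁ X₂)‖ ≤
      ‖S.comp (inr ℝ X₁ X₂)‖ * ‖F‖ := by
  have : S.comp ((ContinuousLinearMap.id ℝ X₁).prod F) - S.comp (inl ℝ X₁ X₂) =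
      (S.comp (inr ℝ X₁ X₂)).comp F := by
    ext w
    rw [sub_apply, comp_apply, ← comp_inl_add_comp_inr]
    simp
  exact this ▸ opNorm_comp_le _ _

lemma norm_symm_apply (he : ∀ x : X, ‖x‖ = N ‖(e x).1‖ ‖(e x).2‖) (p : X₁ × X₂) :
    ‖e.symm p‖ = N ‖p.1‖ ‖p.2‖ := by
  rw [he, e.apply_symm_apply]

lemma norm_symm_comp_inl_le (hN : IsAbsoluteNorm N)
    (he : ∀ x : X, ‖x‖ = N ‖(e x).1‖ ‖(e x).2‖) :
    ‖(e.symm : X₁ × X₂ →L[ℝ] X).comp (inl ℝ X₁ X₂)‖ ≤ 1 :=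
  opNorm_le_bound _ zero_le_one fun w => by
    simp [norm_symm_apply he, hN.apply_zero_right]

lemma norm_symm_comp_inr_le (hN : IsAbsoluteNorm N)
    (he : ∀ x : X, ‖x‖ = N ‖(e x).1‖ ‖(e x).2‖) :
    ‖(e.symm : X₁ × X₂ →L[ℝ] X).comp (inr ℝ X₁ X₂)‖ ≤ 1 :=
  opNorm_le_bound _ zero_le_one fun z => by
    simp [norm_symm_apply he, hN.apply_zero_left]

lemma norm_comp_fst_comp (hN : IsAbsoluteNorm N) (he : ∀ x : X, ‖x‖ = N ‖(e x).1‖ ‖(e x).2‖)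
    (T₁ : X₁ →L[ℝ] Y) : ‖T₁.comp ((fst ℝ X₁ X₂).comp (e : X →L[ℝ] X₁ × X₂))‖ = ‖T₁‖ := by
  set T := T₁.comp ((fst ℝ X₁ X₂).comp (e : X →L[ℝ] X₁ × X₂))
  have hfst : ‖(fst ℝ X₁ X₂).comp (e : X →L[ℝ] X₁ × X₂)‖ ≤ 1 :=
    opNorm_le_bound _ zero_le_one fun x => by
      simpa [he x] using hN.abs_left_le ‖(e x).1‖ ‖(e x).2‖
  have hT₁ : T₁ = T.comp ((e.symm : X₁ × X₂ →L[ℝ] X).comp (inl ℝ X₁ X₂)) := by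
    ext w
    simp [T]
  refine le_antisymm ?_ ?_
  · simpa using opNorm_comp_le T₁ ((fst ℝ X₁ X₂).comp (e : X →L[ℝ] X₁ × X₂))
      |>.trans (mul_le_of_le_one_right (norm_nonneg T₁) hfst)
  · conv_lhs => rw [hT₁]
    exact (opNorm_comp_le _ _).trans
      (mul_le_of_le_one_right (norm_nonneg T) (norm_symm_comp_inl_le hN he))

theorem HasBPBpCompact.exists_near_of_absoluteSum (h : HasBPBpCompact X Y)
    (hN : IsAbsoluteNorm N) (he : ∀ x : X, ‖x‖ = N ‖(e x).1‖ ‖(e x).2‖) {ε : ℝ} (hε : 0 < ε) :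
    ∃ η : ℝ, 0 < η ∧ ∀ (T₁ : X₁ →L[ℝ] Y) (x₀ : X₁), IsCompactOperator T₁ →
      ‖T₁‖ = 1 → ‖x₀‖ = 1 → 1 - η < ‖T₁ x₀‖ →
      ∃ (S : X₁ × X₂ →L[ℝ] Y) (u : X₁ × X₂), IsCompactOperator S ∧
        (∀ p : X₁ × X₂, ‖S p‖ ≤ N ‖p.1‖ ‖p.2‖) ∧ N ‖u.1‖ ‖u.2‖ = 1 ∧ ‖S u‖ = 1 ∧
        N ‖u.1 - x₀‖ ‖u.2‖ < ε ∧ ‖S.comp (inl ℝ X₁ X₂) - T₁‖ < ε ∧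
        ‖S.comp (inr ℝ X₁ X₂)‖ < ε := by
  obtain ⟨η, hη, hbpb⟩ := h ε hε
  refine ⟨η, hη, fun T₁ x₀ hT₁ hT₁n hx₀ hT₁x₀ => ?_⟩
  set P : X →L[ℝ] X₁ := (fst ℝ X₁ X₂).comp (e : X →L[ℝ] X₁ × X₂)
  set Q : X₁ × X₂ →L[ℝ] X := ↑e.symm
  set ι₁ : X₁ →L[ℝ] X := Q.comp (inl ℝ X₁ X₂)
  set ι₂ : X₂ →L[ℝ] X := Q.comp (inr ℝ X₁ X₂)
  obtain ⟨S, x₁, hS, hSn, hx₁, hSx₁, hx₁x₀, hST⟩ :=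
    hbpb (T₁.comp P) (ι₁ x₀) (hT₁.comp_clm P) (by rw [norm_comp_fst_comp hN he, hT₁n])
      (by simpa [ι₁, Q, norm_symm_apply he, hN.apply_zero_right] using hx₀)
      (by simpa [P, ι₁, Q] using hT₁x₀)
  have hinl : (S.comp Q).comp (inl ℝ X₁ X₂) - T₁ = (S - T₁.comp P).comp ι₁ := by
    ext w
    simp [P, ι₁, Q]
  have hinr : (S.comp Q).comp (inr ℝ X₁ X₂) = (S - T₁.comp P).comp ι₂ := by
    ext z
    simp [P, ι₂, Q]
  refine ⟨S.comp Q, e x₁, hS.comp_clm Q, fun p => ?_, (he x₁).symm.trans hx₁,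
    by simpa [Q] using hSx₁, ?_, ?_, ?_⟩
  · calc ‖S (e.symm p)‖ ≤ ‖S‖ * ‖e.symm p‖ := S.le_opNorm _
      _ = N ‖p.1‖ ‖p.2‖ := by rw [hSn, one_mul, norm_symm_apply he]
  · have : e (x₁ - ι₁ x₀) = ((e x₁).1 - x₀, (e x₁).2) := by
      ext <;> simp [ι₁, Q]
    rwa [he, this] at hx₁x₀
  · rw [hinl]
    exact (opNorm_comp_le _ _).trans_lt
      ((mul_le_of_le_one_right (norm_nonneg _) (norm_symm_comp_inl_le hN he)).trans_lt hST)
  · rw [hinr]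
    exact (opNorm_comp_le _ _).trans_lt
      ((mul_le_of_le_one_right (norm_nonneg _) (norm_symm_comp_inr_le hN he)).trans_lt hST)

theorem HasBPBpCompact.of_absoluteSum_typeOne (h : HasBPBpCompact X Y) (hN : IsAbsoluteNorm N)
    (he : ∀ x : X, ‖x‖ = N ‖(e x).1‖ ‖(e x).2‖) (htype : AbsNormTypeOne N) :
    HasBPBpCompact X₁ Y := by
  obtain ⟨K, hK, hKle⟩ := htype
  intro ε hε
  obtain ⟨η, hη, hnear⟩ := h.exists_near_of_absoluteSum hN he (lt_min hε hK)
  refine ⟨η, hη, fun T₁ x₀ hT₁ hT₁n hx₀ hT₁x₀ => ?_⟩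
  obtain ⟨S, u, hS, hSle, hu, hSu, hux₀, hSinl, hSinr⟩ := hnear T₁ x₀ hT₁ hT₁n hx₀ hT₁x₀
  have hu₂ : u.2 = 0 :=
    snd_eq_zero_of_typeOne hN hKle hSle (hSinr.trans_le (min_le_right _ _)) hu hSu
  have hSu₁ : ‖S.comp (inl ℝ X₁ X₂) u.1‖ = 1 := by
    rw [← hSu, ← comp_inl_add_comp_inr S u, hu₂, map_zero, add_zero]
  obtain ⟨hSn, hu₁⟩ := norm_eq_one_of_norm_apply_eq_one (norm_comp_inl_apply_le hN hSle)
    (by rw [← hu, hu₂, norm_zero, hN.apply_zero_right, abs_norm]) hSu₁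
  refine ⟨S.comp (inl ℝ X₁ X₂), u.1, hS.comp_clm _, hSn, hu₁, hSu₁, ?_,
    hSinl.trans_le (min_le_left _ _)⟩
  have := hN.abs_left_le ‖u.1 - x₀‖ ‖u.2‖
  rw [abs_norm] at this
  linarith [min_le_left ε K]

theorem HasBPBpCompact.of_absoluteSum_typeInfty (h : HasBPBpCompact X Y)
    (hN : IsAbsoluteNorm N) (he : ∀ x : X, ‖x‖ = N ‖(e x).1‖ ‖(e x).2‖)
    (htype : AbsNormTypeInfty N) : HasBPBpCompact X₁ Y := by
  obtain ⟨b₀, hb₀, hb⟩ := htype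
  intro ε hε
  set δ := min (ε / 2) (min (b₀ / 2) (1 / 2))
  have hδε : δ ≤ ε / 2 := min_le_left _ _
  have hδb : δ ≤ b₀ / 2 := (min_le_right _ _).trans (min_le_left _ _)
  have hδ1 : δ ≤ 1 / 2 := (min_le_right _ _).trans (min_le_right _ _)
  obtain ⟨η, hη, hnear⟩ := h.exists_near_of_absoluteSum hN he
    (lt_min (half_pos hε) (lt_min (half_pos hb₀) one_half_pos))
  refine ⟨η, hη, fun T₁ x₀ hT₁ hT₁n hx₀ hT₁x₀ => ?_⟩
  obtain ⟨S, u, hS, hSle, hu, hSu, hux₀, hSinl, hSinr⟩ := hnear T₁ x₀ hT₁ hT₁n hx₀ hT₁x₀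
  have hu₁x₀ : ‖u.1 - x₀‖ < δ := by
    simpa only [abs_norm] using (hN.abs_left_le _ _).trans_lt hux₀
  have hu₂ : ‖u.2‖ < δ := by
    simpa only [abs_norm] using (hN.abs_right_le _ _).trans_lt hux₀
  have hu₁ : 1 - δ < ‖u.1‖ := by
    linarith [norm_sub_norm_le x₀ u.1, norm_sub_rev x₀ u.1]
  have hu₂u₁ : ‖u.2‖ ≤ b₀ * ‖u.1‖ := by nlinarith
  have hu₁0 : u.1 ≠ 0 := norm_pos_iff.mp (by linarith)
  obtain ⟨f, hfu, hf⟩ := exists_apply_eq_one_norm_eq_inv hu₁0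
  set R := S.comp ((ContinuousLinearMap.id ℝ X₁).prod (f.smulRight u.2))
  have hRu : ‖R u.1‖ = 1 := by simpa [R, hfu] using hSu
  have hfu₂ : ‖f‖ * ‖u.2‖ ≤ b₀ := by
    rwa [hf, inv_mul_le_iff₀ (by linarith), mul_comm]
  obtain ⟨hRn, hu₁n⟩ := norm_eq_one_of_norm_apply_eq_one
    (norm_comp_prod_smulRight_apply_le hN hb hSle hfu₂)
    (by simpa [hu] using hN.abs_left_le ‖u.1‖ ‖u.2‖) hRu
  refine ⟨R, u.1, hS.comp_clm _, hRn, hu₁n, hRu, by linarith, ?_⟩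
  calc ‖R - T₁‖ ≤ ‖R - S.comp (inl ℝ X₁ X₂)‖ + ‖S.comp (inl ℝ X₁ X₂) - T₁‖ :=
        norm_sub_le_norm_sub_add_norm_sub _ _ _
    _ ≤ ‖S.comp (inr ℝ X₁ X₂)‖ * ‖u.2‖ + ‖S.comp (inl ℝ X₁ X₂) - T₁‖ := by
        grw [norm_comp_prod_sub_comp_inl_le, norm_smulRight_apply, hf, hu₁n, inv_one, one_mul]
    _ < ε := by nlinarith [norm_nonneg (S.comp (inr ℝ X₁ X₂)), norm_nonneg u.2]

end AbsoluteSum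

theorem bpbp_compact_absolute_summand_domain_general (X X₁ X₂ Y : Type*)
    [NormedAddCommGroup X] [NormedSpace ℝ X]
    [NormedAddCommGroup X₁] [NormedSpace ℝ X₁]
    [NormedAddCommGroup X₂] [NormedSpace ℝ X₂]
    [NormedAddCommGroup Y] [NormedSpace ℝ Y]
    (N : ℝ → ℝ → ℝ) (hN : IsAbsoluteNorm N)
    (e : X ≃L[ℝ] X₁ × X₂) (he : ∀ x : X, ‖x‖ = N ‖(e x).1‖ ‖(e x).2‖)
    (htype : AbsNormTypeOne N ∨ AbsNormTypeInfty N)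
    (h : HasBPBpCompact X Y) : HasBPBpCompact X₁ Y :=
  htype.elim (h.of_absoluteSum_typeOne hN he) (h.of_absoluteSum_typeInfty hN he)

theorem bpbp_compact_absolute_summand_domain (X X₁ X₂ Y : Type*)
    [NormedAddCommGroup X] [NormedSpace ℝ X] [CompleteSpace X]
    [NormedAddCommGroup X₁] [NormedSpace ℝ X₁] [CompleteSpace X₁]
    [NormedAddCommGroup X₂] [NormedSpace ℝ X₂] [CompleteSpace X₂]
    [NormedAddCommGroup Y] [NormedSpace ℝ Y] [CompleteSpace Y]
    (N : ℝ → ℝ → ℝ) (hN : IsAbsoluteNorm N)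
    (e : X ≃L[ℝ] X₁ × X₂) (he : ∀ x : X, ‖x‖ = N ‖(e x).1‖ ‖(e x).2‖)
    (htype : AbsNormTypeOne N ∨ AbsNormTypeInfty N)
    (h : HasBPBpCompact X Y) : HasBPBpCompact X₁ Y :=
  bpbp_compact_absolute_summand_domain_general X X₁ X₂ Y N hN e he htype h
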